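/- The recursive grafting form of Tonks' vertex map agrees with its splitting form: for every permutation π ∈ S_n (n ≥ 0), the tree φ̂(π) defined by φ̂(∅) = *, φ̂(π) = t for n = 1, and φ̂(π) = φ̂(std(π_2⋯π_n)) ◁_{π_1} t for n > 1, equals the tree φ(π) defined by φ(∅) = * and φ(π) = φ(std(π^{<π_n})) ∨ φ(std(π^{>π_n})) for n > 0. -/

import Mathlib

/-- Indexed terms of the language `L^I`: generators `2^k` and partial compositions. -/
inductive Trm : Type
  | gen : ℕ → Trm
  | comp : Trm → ℕ → Trm → Trm
deriving DecidableEq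

namespace Trm

/-- Arity `|A|`. -/
def arity : Trm → ℕ
  | gen _ => 2
  | comp A _ B => A.arity + B.arity - 1

/-- Set of indices occurring in a term. -/
def ind : Trm → Finset ℕ
  | gen k => {k}
  | comp A _ B => A.ind ∪ B.ind

/-- Root index. -/
def root : Trm → ℕ
  | gen k => k
  | comp A _ _ => A.root

/-- Number of occurrences of the generator. -/
def countGen : Trm → ℕ
  | gen _ => 1
  | comp A _ B => A.countGen + B.countGen

end Trm

/-- The congruence `=_I` generated by (assoc1) and (assoc2). -/
inductive IEq : Trm → Trm → Prop
  | refl (A : Trm) : IEq A A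
  | symm {A B} : IEq A B → IEq B A
  | trans {A B C} : IEq A B → IEq B C → IEq A C
  | congr {A A' B B'} (n : ℕ) : IEq A A' → IEq B B' →
      IEq (Trm.comp A n B) (Trm.comp A' n B')
  | assoc1 (A B C : Trm) (n m : ℕ) : n ≤ m → m < n + B.arity →
      IEq (Trm.comp (Trm.comp A n B) m C) (Trm.comp A n (Trm.comp B (m - n + 1) C))
  | assoc2 (A B C : Trm) (n m : ℕ) : n + B.arity ≤ m →
      IEq (Trm.comp (Trm.comp A n B) m C) (Trm.comp (Trm.comp A (m - B.arity + 1) C) n B)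

/-- Planar binary trees. -/
inductive BT : Type
  | leaf : BT
  | node : BT → BT → BT
deriving DecidableEq

namespace BT

/-- Number of leaves. -/
def leaves : BT → ℕ
  | leaf => 1
  | node l r => l.leaves + r.leaves

/-- Graft `S` at the `i`-th leaf (1-indexed) of a tree. -/
def graft : BT → ℕ → BT → BT
  | leaf, _, S => S
  | node l r, i, S =>
    if i ≤ l.leaves then node (l.graft i S) r else node l (r.graft (i - l.leaves) S)

end BT

/-- Evaluation `ε` of indexed terms to planar binary trees. -/
def Trm.eval : Trm → BT
  | Trm.gen _ => BT.node BT.leaf BT.leaf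
  | Trm.comp A i B => A.eval.graft i B.eval

/-- `l`-factors. -/
inductive LFactor : Trm → Prop
  | gen (k : ℕ) : LFactor (Trm.gen k)
  | step {A : Trm} (j : ℕ) : LFactor A → j ∉ A.ind →
      LFactor (Trm.comp A ((A.ind.filter (· < j)).card + 1) (Trm.gen j))

/-- Auxiliary for the head-insertion encoding: `done` is the list of already
inserted letters. -/
def hAux : Trm → List ℕ → List ℕ → Trm
  | A, _, [] => A
  | A, done, y :: rest =>
      hAux (Trm.comp A ((done.filter (· < y)).length + 1) (Trm.gen y)) (done ++ [y]) rest

/-- Head-insertion encoding `h` (junk value on the empty word). -/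
def hWord : List ℕ → Trm
  | [] => Trm.gen 0
  | x :: rest => hAux (Trm.gen x) [x] rest

/-- `u_a(x)`: number of letters to the left of `x` in `a` that are greater than `x`. -/
def uCount (a : List ℕ) (x : ℕ) : ℕ := ((a.takeWhile (· ≠ x)).filter (x < ·)).length

/-- Decreasing rearrangement of a word. -/
def sortDesc (a : List ℕ) : List ℕ := (a.mergeSort (· ≤ ·)).reverse

/-- Decreasing encoding `f` (junk value on the empty word). -/
def fWord (a : List ℕ) : Trm :=
  match sortDesc a with
  | [] => Trm.gen 0
  | k :: rest => rest.foldl (fun A x => Trm.comp A (uCount a x + 1) (Trm.gen x)) (Trm.gen k)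

/-- Standardization of a word of distinct integers. -/
def std (a : List ℕ) : List ℕ := a.map (fun x => (a.filter (· ≤ x)).length)

/-- Tonks' vertex map, splitting form `φ`. -/
def tonksPhi (a : List ℕ) : BT :=
  match ha : a.getLast? with
  | none => BT.leaf
  | some x =>
      BT.node (tonksPhi (std (a.filter (· < x)))) (tonksPhi (std (a.filter (x < ·))))
termination_by a.length
decreasing_by
  · have hx : x ∈ a := List.mem_of_mem_getLast? (Option.mem_def.mpr ha)
    have : (a.filter (· < x)).length < a.length := by
      apply List.length_filter_lt_length_iff_exists.2
      exact ⟨x, hx, by simp⟩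
    first
    | simpa [std] using this
    | (simp [std]; exact lt_of_lt_of_eq (List.length_filter_lt_length_iff_exists.2 ⟨⟨x, hx⟩, List.mem_attach _ _, by simp⟩) List.length_attach)
  · have hx : x ∈ a := List.mem_of_mem_getLast? (Option.mem_def.mpr ha)
    have : (a.filter (x < ·)).length < a.length := by
      apply List.length_filter_lt_length_iff_exists.2
      exact ⟨x, hx, by simp⟩
    first
    | simpa [std] using this
    | (simp [std]; exact lt_of_lt_of_eq (List.length_filter_lt_length_iff_exists.2 ⟨⟨x, hx⟩, List.mem_attach _ _, by simp⟩) List.length_attach)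

/-- Tonks' vertex map, head-grafting form `φ̂`. -/
def phiHat : List ℕ → BT
  | [] => BT.leaf
  | x :: rest => (phiHat (std rest)).graft x (BT.node BT.leaf BT.leaf)
termination_by a => a.length
decreasing_by
  simp [std]

/-- The Loday–Ronco map `ψ`. -/
def lodayPsi (a : List ℕ) : BT :=
  match hm : a.maximum with
  | none => BT.leaf
  | some m =>
      let i := a.idxOf m
      BT.node (lodayPsi (std (a.take i))) (lodayPsi (std (a.drop (i + 1))))
termination_by a.length
decreasing_by
  · have hmem : m ∈ a := List.maximum_mem hm
    have hi : a.idxOf m < a.length := List.idxOf_lt_length_iff.2 hmem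
    simp only [std, List.length_map, List.length_take]
    omega
  · have : a ≠ [] := by rintro rfl; simp [List.maximum] at hm
    have : 0 < a.length := List.length_pos_iff.2 this
    simp only [std, List.length_map, List.length_drop]
    omega

/-- Inverse of a permutation word on `{1,…,n}`. -/
def invWord (π : List ℕ) : List ℕ :=
  (List.range π.length).map (fun j => π.idxOf (j + 1) + 1)

/-- One Tamari (right rotation) step, at any subtree. -/
inductive TamariStep : BT → BT → Prop
  | rot (X Y Z : BT) : TamariStep (BT.node (BT.node X Y) Z) (BT.node X (BT.node Y Z))
  | left {l l'} (r : BT) : TamariStep l l' → TamariStep (BT.node l r) (BT.node l' r)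
  | right (l : BT) {r r'} : TamariStep r r' → TamariStep (BT.node l r) (BT.node l r')

/-- The Tamari order. -/
def TamariLE : BT → BT → Prop := Relation.ReflTransGen TamariStep

/-- The strict Tamari order. -/
def TamariLT : BT → BT → Prop := Relation.TransGen TamariStep

/-- One cover of the right weak Bruhat order on words. -/
inductive BruhatStep : List ℕ → List ℕ → Prop
  | swap (α : List ℕ) {u v : ℕ} (β : List ℕ) : u < v →
      BruhatStep (α ++ u :: v :: β) (α ++ v :: u :: β)

/-- The right weak Bruhat order on words. -/
def BruhatLE : List ℕ → List ℕ → Prop := Relation.ReflTransGen BruhatStep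

/-- Head-insertion index `k(a; σ)`. -/
def kIdx (a : ℕ) (σ : List ℕ) : ℕ := 1 + (σ.filter (· < a)).length

/-!
Both forms of Tonks' map only see the relative order of the letters: `tonksPhi` because it
standardizes the subwords it recurses on, so `tonksPhi (std a) = tonksPhi a`. The key step is that
splitting at the last letter commutes with grafting at the first: if `y` ends `rest`, the letter `x`
of `x :: rest` falls into `rest^{<y}` or `rest^{>y}`, and by induction `tonksPhi (x :: rest)` is
`tonksPhi rest` with the corolla grafted at leaf `k(x; rest)`, the rank of `x`. One step of the
recursion of `phiHat` on `std (x :: rest)` performs the same grafting, and a permutation of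
`{1, …, n}` is its own standardization.
-/

namespace BT

theorem graft_node_of_le {l r S : BT} {i : ℕ} (h : i ≤ l.leaves) :
    (node l r).graft i S = node (l.graft i S) r := by
  simp only [graft, if_pos h]

theorem graft_node_of_lt {l r S : BT} {i : ℕ} (h : l.leaves < i) :
    (node l r).graft i S = node l (r.graft (i - l.leaves) S) := by
  simp only [graft, if_neg (Nat.not_le.2 h)]

end BT

def stdRank (a : List ℕ) (x : ℕ) : ℕ := (a.filter (· ≤ x)).length

theorem std_eq_map_stdRank (a : List ℕ) : std a = a.map (stdRank a) := rfl

theorem strictMonoOn_stdRank (a : List ℕ) : StrictMonoOn (stdRank a) {x | x ∈ a} := by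
  intro u _ v hv huv
  have hsub : (a.filter (· ≤ u)).Sublist (a.filter (· ≤ v)) :=
    a.monotone_filter_right fun z hz => by simp only [decide_eq_true_eq] at hz ⊢; omega
  refine lt_of_le_of_ne hsub.length_le fun hlen => ?_
  have hv' : v ∈ a.filter (· ≤ u) := hsub.eq_of_length hlen ▸ List.mem_filter.2 ⟨hv, by simp⟩
  simp only [List.mem_filter, decide_eq_true_eq] at hv'
  omega

theorem std_map_of_strictMonoOn {a : List ℕ} {f : ℕ → ℕ} (hf : StrictMonoOn f {x | x ∈ a}) :
    std (a.map f) = std a := by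
  simp only [std, List.map_map, List.filter_map]
  refine List.map_congr_left fun x hx => ?_
  simp only [Function.comp_apply, List.length_map]
  congr 1
  exact List.filter_congr fun z hz => by simp only [Function.comp_apply, hf.le_iff_le hz hx]

theorem tonksPhi_nil : tonksPhi [] = BT.leaf := by
  rw [tonksPhi]; rfl

theorem tonksPhi_eq_node_std {a : List ℕ} {y : ℕ} (h : a.getLast? = some y) :
    tonksPhi a = BT.node (tonksPhi (std (a.filter (· < y)))) (tonksPhi (std (a.filter (y < ·)))) := by
  rw [tonksPhi]
  split <;> simp_all

theorem tonksPhi_map_of_strictMonoOn {a : List ℕ} {f : ℕ → ℕ} (hf : StrictMonoOn f {x | x ∈ a}) :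
    tonksPhi (a.map f) = tonksPhi a := by
  rcases h : a.getLast? with _ | y
  · simp [List.getLast?_eq_none_iff.1 h]
  have hy : y ∈ a := List.mem_of_getLast? h
  have hlast : (a.map f).getLast? = some (f y) := by simp [List.getLast?_map, h]
  have hlt : a.filter ((· < f y) ∘ f) = a.filter (· < y) :=
    List.filter_congr fun z hz => by simp only [Function.comp_apply, hf.lt_iff_lt hz hy]
  have hgt : a.filter ((f y < ·) ∘ f) = a.filter (y < ·) :=
    List.filter_congr fun z hz => by simp only [Function.comp_apply, hf.lt_iff_lt hy hz]
  have hsub (p : ℕ → Bool) : StrictMonoOn f {x | x ∈ a.filter p} :=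
    hf.mono fun _ hz => List.mem_of_mem_filter hz
  rw [tonksPhi_eq_node_std h, tonksPhi_eq_node_std hlast, List.filter_map,
    List.filter_map, hlt, hgt, std_map_of_strictMonoOn (hsub _), std_map_of_strictMonoOn (hsub _)]

theorem tonksPhi_std (a : List ℕ) : tonksPhi (std a) = tonksPhi a :=
  tonksPhi_map_of_strictMonoOn (strictMonoOn_stdRank a)

theorem tonksPhi_eq_node {a : List ℕ} {y : ℕ} (h : a.getLast? = some y) :
    tonksPhi a = BT.node (tonksPhi (a.filter (· < y))) (tonksPhi (a.filter (y < ·))) := by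
  rw [tonksPhi_eq_node_std h, tonksPhi_std, tonksPhi_std]

theorem length_filter_lt_add_length_filter_gt_add_count (a : List ℕ) (y : ℕ) :
    (a.filter (· < y)).length + (a.filter (y < ·)).length + a.count y = a.length := by
  induction a with
  | nil => rfl
  | cons z a ih =>
    simp only [List.filter_cons, List.count_cons, List.length_cons]
    rcases lt_trichotomy z y with h | rfl | h
    · simp [h, h.ne, h.not_gt]; omega
    · simp; omega
    · simp [h, h.ne', h.not_gt]; omega

theorem List.Nodup.length_filter_lt_add_length_filter_gt {a : List ℕ} (ha : a.Nodup) {y : ℕ}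
    (hy : y ∈ a) : (a.filter (· < y)).length + (a.filter (y < ·)).length + 1 = a.length := by
  rw [← List.count_eq_one_of_mem ha hy, length_filter_lt_add_length_filter_gt_add_count]

theorem leaves_tonksPhi {a : List ℕ} (ha : a.Nodup) : (tonksPhi a).leaves = a.length + 1 := by
  induction hn : a.length using Nat.strong_induction_on generalizing a with
  | _ n ih =>
  rcases h : a.getLast? with _ | y
  · simp [List.getLast?_eq_none_iff.1 h, tonksPhi_nil, BT.leaves] at hn ⊢
    omega
  have hy : y ∈ a := List.mem_of_getLast? h
  have hsplit := ha.length_filter_lt_add_length_filter_gt hy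
  rw [tonksPhi_eq_node h, BT.leaves, ih _ (by omega) (ha.filter _) rfl,
    ih _ (by omega) (ha.filter _) rfl]
  omega

theorem tonksPhi_cons {x : ℕ} {rest : List ℕ} (hx : x ∉ rest) (hrest : rest.Nodup) :
    tonksPhi (x :: rest) = (tonksPhi rest).graft (kIdx x rest) (BT.node BT.leaf BT.leaf) := by
  induction hn : rest.length using Nat.strong_induction_on generalizing rest with
  | _ n ih =>
  rcases h : rest.getLast? with _ | y
  · rw [List.getLast?_eq_none_iff.1 h, tonksPhi_eq_node rfl]
    simp [tonksPhi_nil, BT.graft]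
  have hy : y ∈ rest := List.mem_of_getLast? h
  have hxy : x ≠ y := fun e => hx (e ▸ hy)
  have hlast : (x :: rest).getLast? = some y := by simp [List.getLast?_cons, h]
  have hleaves := leaves_tonksPhi (hrest.filter (· < y))
  have ih_filter (p : ℕ → Bool) (hp : p y = false) :=
    ih _ (hn ▸ List.length_filter_lt_length_iff_exists.2 ⟨y, hy, by simpa using hp⟩)
      (fun h => hx (List.mem_of_mem_filter h)) (hrest.filter p) rfl
  rw [tonksPhi_eq_node hlast, tonksPhi_eq_node h]
  rcases hxy.lt_or_gt with hlt | hgt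
  · have hkIdx : kIdx x (rest.filter (· < y)) = kIdx x rest := by
      simp only [kIdx, List.filter_filter]
      congr 2
      exact List.filter_congr fun z _ => by simp; omega
    rw [List.filter_cons_of_pos (by simpa), List.filter_cons_of_neg (by simp; omega),
      ih_filter _ (by simp), hkIdx, BT.graft_node_of_le]
    rw [hleaves, ← hkIdx, kIdx]
    have := List.length_filter_le (· < x) (rest.filter (· < y))
    omega
  · -- the letters of `rest` below `x` are those below `y`, then `y`, then those of `rest^{>y}` below `x`
    have hkIdx : kIdx x rest = (rest.filter (· < y)).length + 1 + kIdx x (rest.filter (y < ·)) := by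
      have := (hrest.filter (· < x)).length_filter_lt_add_length_filter_gt (y := y)
        (List.mem_filter.2 ⟨hy, by simpa⟩)
      have hbelow : rest.filter (fun a => a < y && a < x) = rest.filter (· < y) :=
        List.filter_congr fun z _ => by simp; omega
      have hbetween : rest.filter (fun a => y < a && a < x) = rest.filter (fun a => a < x && y < a) :=
        List.filter_congr fun z _ => Bool.and_comm _ _
      simp only [kIdx, List.filter_filter, hbelow, hbetween] at this ⊢
      omega
    rw [List.filter_cons_of_neg (by simp; omega), List.filter_cons_of_pos (by simpa),
      ih_filter _ (by simp), hkIdx, BT.graft_node_of_lt (by rw [hleaves, kIdx]; omega)]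
    congr 2
    omega

theorem stdRank_cons_self {x : ℕ} {rest : List ℕ} (hx : x ∉ rest) :
    stdRank (x :: rest) x = kIdx x rest := by
  have : rest.filter (· ≤ x) = rest.filter (· < x) :=
    List.filter_congr fun z hz => by simp [le_iff_lt_or_eq, show z ≠ x from fun e => hx (e ▸ hz)]
  simp [stdRank, kIdx, this, Nat.add_comm]

theorem phiHat_std_cons {x : ℕ} {rest : List ℕ} (hx : x ∉ rest) :
    phiHat (std (x :: rest)) = (phiHat (std rest)).graft (kIdx x rest) (BT.node BT.leaf BT.leaf) := by
  have hmono : StrictMonoOn (stdRank (x :: rest)) {z | z ∈ rest} :=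
    (strictMonoOn_stdRank _).mono fun _ hz => List.mem_cons_of_mem x hz
  rw [std_eq_map_stdRank, List.map_cons, phiHat, stdRank_cons_self hx,
    std_map_of_strictMonoOn hmono]

theorem phiHat_std_eq_tonksPhi {a : List ℕ} (ha : a.Nodup) : phiHat (std a) = tonksPhi a := by
  induction a with
  | nil => rw [tonksPhi_nil, std, List.map_nil, phiHat]
  | cons x rest ih =>
    obtain ⟨hx, hrest⟩ := List.nodup_cons.1 ha
    rw [phiHat_std_cons hx, ih hrest, tonksPhi_cons hx hrest]

theorem countP_le_range' (x n : ℕ) : (List.range' 1 n).countP (· ≤ x) = min x n := by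
  induction n with
  | zero => simp
  | succ n ih =>
    rw [List.range'_concat, List.countP_append, ih]
    by_cases h : 1 + n ≤ x <;> simp [h] <;> omega

theorem std_eq_self_of_perm_range' {π : List ℕ} {n : ℕ} (h : π.Perm (List.range' 1 n)) :
    std π = π := by
  refine (List.map_congr_left fun x hx => ?_).trans π.map_id
  have hx' := List.mem_range'_1.1 (h.mem_iff.1 hx)
  show (π.filter (· ≤ x)).length = x
  rw [← List.countP_eq_length_filter, h.countP_eq, countP_le_range']
  omega

theorem phiHat_eq_tonksPhi (n : ℕ) (π : List ℕ) (hperm : π.Perm (List.range' 1 n)) :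
    phiHat π = tonksPhi π := by
  calc phiHat π = phiHat (std π) := by rw [std_eq_self_of_perm_range' hperm]
    _ = tonksPhi π := phiHat_std_eq_tonksPhi (hperm.nodup_iff.2 List.nodup_range')
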